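/- arXiv:2101.00424 — 4 statements merged into one kernel-verified Lean document; each statement's English description precedes it below -/
import Mathlib

section
/- For every real q ≥ 3 and every u ∈ (0, 1), one has 1 - 2q·u^{q-1} + (3q - 1)·u^q - q·u^{q+1} > 0. -/
/-!
Write `w = u ^ (q - 2)`, so that the expression is `1 - w u P(u)` with
`P(u) = 2q - (3q - 1) u + q u²`. Bernoulli's inequality applied to `(1/u) ^ (q - 2)` gives
`w ≤ u / (u + (q - 2)(1 - u))`, which reduces the claim to the polynomial inequality
`u² P(u) < u + (q - 2)(1 - u)`. The difference of the two sides factors as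
`(1 - u)² ((1 - u)(q - 2) + u (q - 3) + q u (1 - u))`, positive for `q ≥ 3`.
-/

open Real

/-- Bernoulli's inequality for `(1 / u) ^ p`, cleared of denominators. -/
theorem rpow_mul_add_mul_one_sub_le {u p : ℝ} (hu : 0 < u) (hp : 1 ≤ p) :
    u ^ p * (u + p * (1 - u)) ≤ u := by
  have hbern : 1 + p * (u⁻¹ - 1) ≤ (u ^ p)⁻¹ := by
    simpa [inv_rpow hu.le] using
      one_add_mul_self_le_rpow_one_add (s := u⁻¹ - 1) (by linarith [inv_pos.2 hu]) hp
  have hup : 0 < u ^ p := rpow_pos_of_pos hu p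
  calc u ^ p * (u + p * (1 - u)) = u ^ p * u * (1 + p * (u⁻¹ - 1)) := by
        field_simp
    _ ≤ u ^ p * u * (u ^ p)⁻¹ := by gcongr
    _ = u := by field_simp

theorem sq_mul_lt_add_mul_one_sub {q u : ℝ} (hq : 3 ≤ q) (hu0 : 0 < u) (hu1 : u < 1) :
    u ^ 2 * (2 * q - (3 * q - 1) * u + q * u ^ 2) < u + (q - 2) * (1 - u) := by
  have hfactor : u + (q - 2) * (1 - u) - u ^ 2 * (2 * q - (3 * q - 1) * u + q * u ^ 2) =
      (1 - u) ^ 2 * ((1 - u) * (q - 2) + u * (q - 3) + q * u * (1 - u)) := by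
    ring
  have hpos : 0 < (1 - u) ^ 2 * ((1 - u) * (q - 2) + u * (q - 3) + q * u * (1 - u)) := by
    have h1u : 0 < 1 - u := by linarith
    have : 0 < (1 - u) * (q - 2) := mul_pos h1u (by linarith)
    have : 0 ≤ u * (q - 3) := mul_nonneg hu0.le (by linarith)
    have : 0 ≤ q * u * (1 - u) := by positivity
    positivity
  linarith

theorem stmt4 (q u : ℝ) (hq : 3 ≤ q) (hu : u ∈ Set.Ioo (0 : ℝ) 1) :
    0 < 1 - 2 * q * u ^ (q - 1) + (3 * q - 1) * u ^ q - q * u ^ (q + 1) := by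
  obtain ⟨hu0, hu1⟩ := hu
  set w := u ^ (q - 2)
  have hpow (e : ℝ) (n : ℕ) (he : e = q - 2 + n) : u ^ e = w * u ^ n := by
    rw [he, rpow_add_natCast hu0.ne']
  rw [hpow (q - 1) 1 (by push_cast; ring), hpow q 2 (by push_cast; ring),
    hpow (q + 1) 3 (by push_cast; ring)]
  have hw : w * (u + (q - 2) * (1 - u)) ≤ u := rpow_mul_add_mul_one_sub_le hu0 (by linarith)
  have hpoly := sq_mul_lt_add_mul_one_sub hq hu0 hu1
  have hP : 0 < 2 * q - (3 * q - 1) * u + q * u ^ 2 := by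
    nlinarith [mul_pos (mul_pos (by linarith : (0 : ℝ) < q) (sub_pos.2 hu1))
      (by linarith : (0 : ℝ) < 2 - u)]
  have hD : 0 < u + (q - 2) * (1 - u) := by nlinarith
  have : w * u * (2 * q - (3 * q - 1) * u + q * u ^ 2) < 1 := by
    rw [← mul_lt_mul_iff_of_pos_right hD, one_mul]
    calc w * u * (2 * q - (3 * q - 1) * u + q * u ^ 2) * (u + (q - 2) * (1 - u))
        = w * (u + (q - 2) * (1 - u)) * (u * (2 * q - (3 * q - 1) * u + q * u ^ 2)) := by ring
      _ ≤ u * (u * (2 * q - (3 * q - 1) * u + q * u ^ 2)) := by gcongr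
      _ < u + (q - 2) * (1 - u) := by linarith
  linarith
end

section
/- Let A be a k×k Hermitian positive semidefinite matrix whose ℓ^p norm of diagonal entries equals its Schatten p-norm for some 1 < p < ∞, i.e. ‖d(A)‖_p = ‖A‖_p. Then A is diagonal. -/
/-!
Write `A = U diag(λ) U*` with `U` unitary. The diagonal of `A` is `W λ`, where `W = (|U i j|²)` is
doubly stochastic. Jensen's inequality for `t ↦ t ^ p` in each row, summed using the column sums,
gives `∑ dᵢ ^ p ≤ ∑ λⱼ ^ p`; by strict convexity equality forces `λⱼ = dᵢ` whenever `U i j ≠ 0`.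
Then `U diag(λ) = diag(d) U`, hence `A = diag(d) U U* = diag(d)`.
-/

open Matrix ComplexOrder

section DoublyStochastic

variable {𝕜 β n : Type*} [Field 𝕜] [LinearOrder 𝕜] [IsStrictOrderedRing 𝕜] [AddCommGroup β]
  [PartialOrder β] [IsOrderedAddMonoid β] [Module 𝕜 β] [IsStrictOrderedModule 𝕜 β] [Fintype n]
  [DecidableEq n] {s : Set 𝕜} {f : 𝕜 → β} {M : Matrix n n 𝕜} {x : n → 𝕜}

theorem sum_sum_smul_of_mem_doublyStochastic {γ : Type*} [AddCommMonoid γ] [Module 𝕜 γ]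
    (hM : M ∈ doublyStochastic 𝕜 n) (y : n → γ) : ∑ i, ∑ j, M i j • y j = ∑ j, y j := by
  simp only [Finset.sum_comm (γ := n), ← Finset.sum_smul, sum_col_of_mem_doublyStochastic hM,
    one_smul]

theorem ConvexOn.map_mulVec_apply_le (hf : ConvexOn 𝕜 s f) (hM : M ∈ doublyStochastic 𝕜 n)
    (hx : ∀ j, x j ∈ s) (i : n) : f ((M *ᵥ x) i) ≤ ∑ j, M i j • f (x j) :=
  hf.map_sum_le (fun _ _ => nonneg_of_mem_doublyStochastic hM)
    (sum_row_of_mem_doublyStochastic hM i) (fun j _ => hx j)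

theorem StrictConvexOn.eq_mulVec_apply_of_sum_map_mulVec_eq (hf : StrictConvexOn 𝕜 s f)
    (hM : M ∈ doublyStochastic 𝕜 n) (hx : ∀ j, x j ∈ s)
    (heq : ∑ i, f ((M *ᵥ x) i) = ∑ j, f (x j)) {i j : n} (hij : M i j ≠ 0) :
    x j = (M *ᵥ x) i := by
  have hrows : ∀ i ∈ Finset.univ, f ((M *ᵥ x) i) = ∑ j, M i j • f (x j) :=
    (Finset.sum_eq_sum_iff_of_le fun i _ => hf.convexOn.map_mulVec_apply_le hM hx i).1 <| by
      rw [heq, sum_sum_smul_of_mem_doublyStochastic hM]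
  exact (hf.map_sum_eq_iff' (fun _ _ => nonneg_of_mem_doublyStochastic hM)
    (sum_row_of_mem_doublyStochastic hM i) (fun j _ => hx j)).1 (hrows i (Finset.mem_univ i)) j
    (Finset.mem_univ j) hij

end DoublyStochastic

namespace Matrix

variable {n : Type*} [Fintype n] [DecidableEq n]

theorem map_normSq_mem_doublyStochastic {U : Matrix n n ℂ} (hU : U ∈ unitaryGroup n ℂ) :
    U.map Complex.normSq ∈ doublyStochastic ℝ n := by
  refine mem_doublyStochastic_iff_sum.2
    ⟨fun i j => Complex.normSq_nonneg _, fun i => ?_, fun j => ?_⟩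
  · have h := congrFun₂ (mem_unitaryGroup_iff.1 hU) i i
    simp only [mul_apply, star_apply, one_apply_eq, RCLike.star_def, Complex.mul_conj] at h
    exact_mod_cast h
  · have h := congrFun₂ (mem_unitaryGroup_iff'.1 hU) j j
    simp only [mul_apply, star_apply, one_apply_eq, RCLike.star_def,
      ← Complex.normSq_eq_conj_mul_self] at h
    exact_mod_cast h

theorem mul_diagonal_mul_star_apply_self (U : Matrix n n ℂ) (d : n → ℝ) (i : n) :
    (U * diagonal (fun j => (d j : ℂ)) * star U) i i = ((U.map Complex.normSq *ᵥ d) i : ℝ) := by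
  rw [mul_apply]
  simp only [mul_diagonal, star_apply, RCLike.star_def, mulVec, dotProduct, map_apply]
  push_cast
  refine Finset.sum_congr rfl fun j _ => ?_
  rw [mul_right_comm, Complex.mul_conj, mul_comm]

theorem isDiag_mul_diagonal_mul_star {U : Matrix n n ℂ} (hU : U ∈ unitaryGroup n ℂ)
    {d c : n → ℂ} (h : ∀ i j, U i j ≠ 0 → d j = c i) : (U * diagonal d * star U).IsDiag := by
  have hcomm : U * diagonal d = diagonal c * U := by
    ext i j
    rw [mul_diagonal, diagonal_mul]
    by_cases hij : U i j = 0
    · simp [hij]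
    · rw [h i j hij, mul_comm]
  rw [hcomm, mul_assoc, mem_unitaryGroup_iff.1 hU, mul_one]
  exact isDiag_diagonal c

theorem IsHermitian.re_diag_eq_mulVec_eigenvalues {A : Matrix n n ℂ} (hA : A.IsHermitian) (i : n) :
    (A i i).re =
      ((hA.eigenvectorUnitary : Matrix n n ℂ).map Complex.normSq *ᵥ hA.eigenvalues) i := by
  conv_lhs => rw [hA.spectral_theorem, Unitary.conjStarAlgAut_apply]
  exact congrArg Complex.re (mul_diagonal_mul_star_apply_self _ hA.eigenvalues i)

end Matrix

theorem stmt11 {k : ℕ} (A : Matrix (Fin k) (Fin k) ℂ) (hA : A.PosSemidef)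
    (p : ℝ) (hp : 1 < p)
    (heq : (∑ i, (A i i).re ^ p) ^ (1 / p) =
      (∑ i, (hA.1.eigenvalues i) ^ p) ^ (1 / p)) :
    A.IsDiag := by
  have hpow_sum : ∑ i, (A i i).re ^ p = ∑ i, hA.1.eigenvalues i ^ p :=
    Real.rpow_left_injOn (one_div_ne_zero (by positivity))
      (Finset.sum_nonneg fun i _ => Real.rpow_nonneg (Complex.le_def.1 hA.diag_nonneg).1 p)
      (Finset.sum_nonneg fun i _ => Real.rpow_nonneg (hA.eigenvalues_nonneg i) p) heq
  simp only [hA.1.re_diag_eq_mulVec_eigenvalues] at hpow_sum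
  have hW := map_normSq_mem_doublyStochastic hA.1.eigenvectorUnitary.2
  rw [hA.1.spectral_theorem, Unitary.conjStarAlgAut_apply]
  exact isDiag_mul_diagonal_mul_star hA.1.eigenvectorUnitary.2 fun i j hij =>
    congrArg Complex.ofReal <| (strictConvexOn_rpow hp).eq_mulVec_apply_of_sum_map_mulVec_eq hW
      hA.eigenvalues_nonneg hpow_sum (Complex.normSq_eq_zero.not.2 hij)
end

section
/- Let ρ be a k×k density matrix (positive semidefinite with trace 1). Then its von Neumann entropy satisfies S(ρ) ≥ log k − k · ‖ρ − I_k/k‖_2², where ‖·‖_2 is the Hilbert–Schmidt norm and S(ρ) = −Tr(ρ log ρ). -/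
/-!
The Hilbert–Schmidt norm is invariant under unitary conjugation, so diagonalising `ρ` turns
`‖ρ - I/k‖₂²` into `∑ᵢ (μᵢ - 1/k)²` and the claim into an inequality for the probability vector
`μ` of eigenvalues. That one holds term by term: `μ log (kμ) ≤ μ (kμ - 1)` is `log x ≤ x - 1`
at `x = kμ`, and the leftover linear terms `1/k - μᵢ` sum to zero.
-/

open Matrix ComplexOrder

namespace Matrix

variable {m n 𝕜 : Type*} [Fintype m] [Fintype n] [RCLike 𝕜]

theorem sum_sq_norm_eq_re_trace_mul_conjTranspose (A : Matrix m n 𝕜) :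
    ∑ i, ∑ j, ‖A i j‖ ^ 2 = RCLike.re (A * Aᴴ).trace := by
  simp only [trace, diag, mul_apply, conjTranspose_apply, RCLike.star_def, RCLike.mul_conj,
    map_sum]
  norm_cast

theorem sum_sq_norm_unitary_conj [DecidableEq n] {U : Matrix n n 𝕜}
    (hU : U ∈ unitaryGroup n 𝕜) (B : Matrix n n 𝕜) :
    ∑ i, ∑ j, ‖(U * B * star U) i j‖ ^ 2 = ∑ i, ∑ j, ‖B i j‖ ^ 2 := by
  have hUU : star U * U = 1 := mem_unitaryGroup_iff'.mp hU
  have hconj : (U * B * star U) * (U * B * star U)ᴴ = U * (B * Bᴴ) * star U := by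
    simp only [← star_eq_conjTranspose, star_mul, star_star, Matrix.mul_assoc]
    rw [← Matrix.mul_assoc (star U) U, hUU, Matrix.one_mul]
  rw [sum_sq_norm_eq_re_trace_mul_conjTranspose, sum_sq_norm_eq_re_trace_mul_conjTranspose,
    hconj, trace_mul_cycle, hUU, Matrix.one_mul]

theorem sum_sq_norm_diagonal [DecidableEq n] (d : n → 𝕜) :
    ∑ i, ∑ j, ‖diagonal d i j‖ ^ 2 = ∑ i, ‖d i‖ ^ 2 := by
  refine Finset.sum_congr rfl fun i _ => ?_
  rw [Finset.sum_eq_single i (fun j _ hji => by simp [diagonal_apply_ne _ hji.symm]) (by simp)]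
  simp

theorem IsHermitian.sum_sq_norm_sub_smul_one [DecidableEq n] {A : Matrix n n 𝕜}
    (hA : A.IsHermitian) (c : ℝ) :
    ∑ i, ∑ j, ‖(A - c • 1) i j‖ ^ 2 = ∑ i, (hA.eigenvalues i - c) ^ 2 := by
  set U : Matrix n n 𝕜 := (hA.eigenvectorUnitary : Matrix n n 𝕜)
  have hUU : U * star U = 1 := mem_unitaryGroup_iff.mp hA.eigenvectorUnitary.2
  have hconj : A - c • 1 = U * diagonal (fun i => ((hA.eigenvalues i - c : ℝ) : 𝕜)) * star U := by
    conv_lhs => rw [hA.spectral_theorem]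
    simp only [Unitary.conjStarAlgAut_apply, RCLike.ofReal_sub,
      RCLike.real_smul_eq_coe_smul (K := 𝕜)]
    rw [← diagonal_sub, ← smul_one_eq_diagonal, Matrix.mul_sub, Matrix.sub_mul, Matrix.mul_smul,
      Matrix.mul_one, Matrix.smul_mul, hUU]
    rfl
  rw [hconj, sum_sq_norm_unitary_conj hA.eigenvectorUnitary.2, sum_sq_norm_diagonal]
  simp only [RCLike.norm_ofReal, sq_abs]

end Matrix

namespace Real

theorem mul_log_add_mul_log_le {c x : ℝ} (hc : 0 < c) (hx : 0 ≤ x) :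
    x * log x + x * log c ≤ x * (c * x - 1) := by
  rcases hx.eq_or_lt with rfl | hx
  · simp
  have hlog := log_le_sub_one_of_pos (mul_pos hc hx)
  rw [log_mul hc.ne' hx.ne'] at hlog
  nlinarith

theorem log_card_sub_le_neg_sum_mul_log {ι : Type*} [Fintype ι] {p : ι → ℝ}
    (hp0 : ∀ i, 0 ≤ p i) (hp1 : ∑ i, p i = 1) :
    log (Fintype.card ι) - Fintype.card ι * ∑ i, (p i - (Fintype.card ι : ℝ)⁻¹) ^ 2 ≤
      -∑ i, p i * log (p i) := by
  set k : ℝ := (Fintype.card ι : ℝ)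
  have hk : 0 < k := by
    have : Nonempty ι := by
      by_contra h
      simp [not_nonempty_iff.mp h] at hp1
    exact Nat.cast_pos.mpr Fintype.card_pos
  have hterm (i : ι) :
      p i * log (p i) ≤ k * (p i - k⁻¹) ^ 2 - p i * log k + (p i - k⁻¹) := by
    have hmul := mul_log_add_mul_log_le hk (hp0 i)
    have hsq : k * (p i - k⁻¹) ^ 2 = p i * (k * p i - 1) - (p i - k⁻¹) := by field_simp
    linarith
  have hsum := Finset.sum_le_sum fun i (_ : i ∈ Finset.univ) => hterm i
  simp only [Finset.sum_add_distrib, Finset.sum_sub_distrib, ← Finset.mul_sum, ← Finset.sum_mul,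
    hp1] at hsum
  have hconst : ∑ _i : ι, k⁻¹ = 1 := by
    rw [Finset.sum_const, Finset.card_univ, nsmul_eq_mul, mul_inv_cancel₀ hk.ne']
  linarith

end Real

theorem stmt15 {k : ℕ} (ρ : Matrix (Fin k) (Fin k) ℂ)
    (hρ : ρ.PosSemidef) (htr : ρ.trace = 1) :
    Real.log k - k * ∑ i, ∑ j, ‖(ρ - (k : ℂ)⁻¹ • 1) i j‖ ^ 2 ≤
      -∑ i, hρ.1.eigenvalues i * Real.log (hρ.1.eigenvalues i) := by
  have hμ : ∑ i, hρ.1.eigenvalues i = 1 := by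
    simpa [htr] using congrArg RCLike.re hρ.1.trace_eq_sum_eigenvalues.symm
  have hk : (k : ℂ)⁻¹ • (1 : Matrix (Fin k) (Fin k) ℂ) = (k : ℝ)⁻¹ • 1 := by
    rw [RCLike.real_smul_eq_coe_smul (K := ℂ)]
    norm_num
  rw [hk, hρ.1.sum_sq_norm_sub_smul_one]
  simpa using Real.log_card_sub_le_neg_sum_mul_log hρ.eigenvalues_nonneg hμ
end

section
/- Let σ be a density matrix on ℂ^k ⊗ ℂ^k (dimension k² ≥ 4) and b ∈ ℂ^k ⊗ ℂ^k a unit vector such that ⟨b|σ|b⟩ ≥ 1/k. Then the von Neumann entropy of σ satisfies S(σ) < 2 log k − (log k)/k + 2/k. -/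
/-!
Writing `σ = U D U*`, the number `⟨b|σ|b⟩` is an average of the eigenvalues of `σ` with weights
`|(U* b)ᵢ|²`, so some eigenvalue `p` is at least `1/k`. Gibbs' inequality against the distribution
with mass `1/k` at that eigenvalue and `1/(k(k+1))` at each of the other `k² - 1` gives
`S(σ) ≤ log k + (1 - p) log (k + 1) ≤ log k + (1 - 1/k) log (k + 1)`, and
`log (k + 1) - log k < 1/k` finishes.
-/

namespace Matrix

variable {n 𝕜 : Type*} [Fintype n] [RCLike 𝕜]

theorem star_dotProduct_self_eq_sum_norm_sq (v : n → 𝕜) :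
    star v ⬝ᵥ v = ∑ i, (‖v i‖ ^ 2 : 𝕜) := by
  simp only [dotProduct, Pi.star_apply, RCLike.star_def, RCLike.conj_mul]

variable [DecidableEq n]

theorem sum_norm_sq_mulVec_of_mem_unitaryGroup {U : Matrix n n 𝕜} (hU : U ∈ unitaryGroup n 𝕜)
    (v : n → 𝕜) : ∑ i, ‖(U *ᵥ v) i‖ ^ 2 = ∑ i, ‖v i‖ ^ 2 := by
  have h : star (U *ᵥ v) ⬝ᵥ (U *ᵥ v) = star v ⬝ᵥ v := by
    rw [star_mulVec, dotProduct_mulVec, vecMul_vecMul, ← star_eq_conjTranspose,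
      mem_unitaryGroup_iff'.mp hU, vecMul_one]
  simp only [star_dotProduct_self_eq_sum_norm_sq] at h
  exact_mod_cast h

variable {A : Matrix n n 𝕜}

theorem IsHermitian.re_star_dotProduct_mulVec (hA : A.IsHermitian) (x : n → 𝕜) :
    RCLike.re (star x ⬝ᵥ A *ᵥ x) = ∑ i, hA.eigenvalues i *
      ‖(star (hA.eigenvectorUnitary : Matrix n n 𝕜) *ᵥ x) i‖ ^ 2 := by
  set U : Matrix n n 𝕜 := (hA.eigenvectorUnitary : Matrix n n 𝕜)
  set c := star U *ᵥ x
  have hxU : star x ᵥ* U = star c := by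
    rw [star_mulVec, ← star_eq_conjTranspose, star_star]
  have h : star x ⬝ᵥ A *ᵥ x = ∑ i, (hA.eigenvalues i : 𝕜) * (‖c i‖ ^ 2 : 𝕜) := by
    conv_lhs => rw [hA.spectral_theorem, Unitary.conjStarAlgAut_apply, ← mulVec_mulVec,
      ← mulVec_mulVec, dotProduct_mulVec, hxU]
    simp only [dotProduct, mulVec_diagonal, Pi.star_apply, RCLike.star_def, Function.comp_apply]
    refine Finset.sum_congr rfl fun i _ => ?_
    rw [← RCLike.conj_mul]; ring
  rw [h]
  simp only [map_sum]
  refine Finset.sum_congr rfl fun i _ => ?_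
  norm_cast

theorem IsHermitian.exists_re_star_dotProduct_mulVec_le_eigenvalues [Nonempty n]
    (hA : A.IsHermitian) (x : n → 𝕜) :
    ∃ i, RCLike.re (star x ⬝ᵥ A *ᵥ x) ≤ hA.eigenvalues i * ∑ j, ‖x j‖ ^ 2 := by
  obtain ⟨i, -, hi⟩ := Finset.exists_max_image Finset.univ hA.eigenvalues Finset.univ_nonempty
  refine ⟨i, ?_⟩
  rw [hA.re_star_dotProduct_mulVec, ← sum_norm_sq_mulVec_of_mem_unitaryGroup
    (star hA.eigenvectorUnitary).2 x, Finset.mul_sum]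
  exact Finset.sum_le_sum fun j _ =>
    mul_le_mul_of_nonneg_right (hi j (Finset.mem_univ j)) (by positivity)

end Matrix

namespace Real

theorem sub_le_mul_log_sub_mul_log {x q : ℝ} (hx : 0 ≤ x) (hq : 0 < q) :
    x - q ≤ x * log x - x * log q := by
  rcases hx.eq_or_lt with rfl | hx
  · simpa using hq.le
  have h := mul_le_mul_of_nonneg_left (self_sub_one_le_mul_log (div_nonneg hx.le hq.le)) hq.le
  rw [log_div hx.ne' hq.ne', mul_sub, mul_one, mul_div_cancel₀ _ hq.ne', ← mul_assoc,
    mul_div_cancel₀ _ hq.ne'] at h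
  linarith

theorem sum_mul_log_le_sum_mul_log {ι : Type*} [Fintype ι] {p q : ι → ℝ} (hp : ∀ i, 0 ≤ p i)
    (hq : ∀ i, 0 < q i) (hpq : ∑ i, q i ≤ ∑ i, p i) :
    ∑ i, p i * log (q i) ≤ ∑ i, p i * log (p i) := by
  have h := Finset.sum_le_sum fun i (_ : i ∈ Finset.univ) =>
    sub_le_mul_log_sub_mul_log (hp i) (hq i)
  simp only [Finset.sum_sub_distrib] at h
  linarith

/-- Gibbs' inequality against the distribution with mass `a` at `i₀` and `r` elsewhere. -/
theorem neg_sum_mul_log_le {ι : Type*} [Fintype ι] [DecidableEq ι] {p : ι → ℝ}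
    (hp : ∀ i, 0 ≤ p i) (hp1 : ∑ i, p i = 1) (i₀ : ι) {a r : ℝ} (ha : 0 < a) (hr : 0 < r)
    (har : a + (Fintype.card ι - 1) * r ≤ 1) :
    -∑ i, p i * log (p i) ≤ -(p i₀ * log a + (1 - p i₀) * log r) := by
  set q : ι → ℝ := fun i => if i = i₀ then a else r
  have hsplit : ∀ f : ι → ℝ, ∑ i, f i = f i₀ + ∑ i ∈ Finset.univ.erase i₀, f i := fun f =>
    (Finset.add_sum_erase _ _ (Finset.mem_univ i₀)).symm
  have hq_erase : ∀ i ∈ Finset.univ.erase i₀, q i = r := fun i hi =>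
    if_neg (Finset.ne_of_mem_erase hi)
  have hq_sum : ∑ i, q i = a + (Fintype.card ι - 1) * r := by
    rw [hsplit, Finset.sum_congr rfl hq_erase, Finset.sum_const,
      Finset.card_erase_of_mem (Finset.mem_univ _), Finset.card_univ, nsmul_eq_mul,
      Nat.cast_pred (Fintype.card_pos_iff.2 ⟨i₀⟩)]
    simp [q]
  have hp_erase : ∑ i ∈ Finset.univ.erase i₀, p i = 1 - p i₀ := by
    rw [hsplit] at hp1; linarith
  have hpq : ∑ i, p i * log (q i) = p i₀ * log a + (1 - p i₀) * log r := by
    rw [hsplit, Finset.sum_congr rfl fun i hi => by rw [hq_erase i hi], ← Finset.sum_mul,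
      hp_erase]
    simp [q]
  have hq : ∀ i, 0 < q i := fun i => by by_cases h : i = i₀ <;> simp [q, h, ha, hr]
  rw [← hpq, neg_le_neg_iff]
  exact sum_mul_log_le_sum_mul_log hp hq (by rw [hq_sum, hp1]; exact har)

theorem neg_mul_log_inv_add_mul_log_inv_lt {x p : ℝ} (hx : 0 < x) (hp : x⁻¹ ≤ p) :
    -(p * log x⁻¹ + (1 - p) * log (x * (x + 1))⁻¹) < 2 * log x - log x / x + 2 / x := by
  have hM : 0 < log (x + 1) := log_pos (by linarith)
  have hML : log (x + 1) - log x < x⁻¹ := by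
    rw [← log_div (by positivity) hx.ne']
    calc log ((x + 1) / x) < (x + 1) / x - 1 :=
          log_lt_sub_one_of_pos (by positivity) (by rw [ne_eq, div_eq_one_iff_eq hx.ne']; simp)
      _ = x⁻¹ := by field_simp; ring
  have hML0 : 0 ≤ log (x + 1) - log x := sub_nonneg.2 (log_le_log hx (by linarith))
  rw [log_inv, log_inv, log_mul hx.ne' (by positivity), div_eq_mul_inv, div_eq_mul_inv]
  nlinarith [mul_nonneg (sub_nonneg.2 hp) hM.le, mul_nonneg (inv_pos.2 hx).le hML0, inv_pos.2 hx]

end Real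

open Matrix ComplexOrder

theorem stmt16 {k : ℕ} (hk : 2 ≤ k)
    (σ : Matrix (Fin k × Fin k) (Fin k × Fin k) ℂ)
    (hσ : σ.PosSemidef) (htr : σ.trace = 1)
    (b : Fin k × Fin k → ℂ) (hb : ∑ i, ‖b i‖ ^ 2 = 1)
    (hbσ : (1 : ℝ) / k ≤ (star b ⬝ᵥ σ.mulVec b).re) :
    -∑ i, hσ.1.eigenvalues i * Real.log (hσ.1.eigenvalues i) <
      2 * Real.log k - Real.log k / k + 2 / k := by
  have : Nonempty (Fin k) := ⟨⟨0, by omega⟩⟩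
  have hk0 : (0 : ℝ) < k := by positivity
  have hsum : ∑ i, hσ.1.eigenvalues i = 1 := by
    simpa [htr] using congrArg Complex.re hσ.1.trace_eq_sum_eigenvalues.symm
  obtain ⟨i₀, hi₀⟩ := hσ.1.exists_re_star_dotProduct_mulVec_le_eigenvalues b
  rw [hb, mul_one] at hi₀
  have hcomparison :
      (k : ℝ)⁻¹ + (Fintype.card (Fin k × Fin k) - 1) * (k * (k + 1) : ℝ)⁻¹ = 1 := by
    simp only [Fintype.card_prod, Fintype.card_fin, Nat.cast_mul]
    field_simp
    ring
  calc _ ≤ _ := Real.neg_sum_mul_log_le hσ.eigenvalues_nonneg hsum i₀ (by positivity)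
        (by positivity) hcomparison.le
    _ < _ := Real.neg_mul_log_inv_add_mul_log_inv_lt hk0
        (by rw [← one_div]; exact hbσ.trans hi₀)
end
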